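/- arXiv:2407.05632 — 2 statements merged into one kernel-verified Lean document; each statement's English description precedes it below -/
import Mathlib

section
/- Let υ : ℂ → ℂ be continuous at x₀ with υ(x₀) ≠ 0 and arg(υ(x₀)) = 0. Then for any sequence xₙ → x₀ with arg(υ(xₙ)) < 0 for all n, cbrt'(υ(xₙ)) → exp(2πi/3) · cbrt'(υ(x₀)); i.e., along a path crossing from the region {arg υ < 0} into {arg υ ≥ 0}, the analytic continuation of the branch cbrt'∘υ is given by exp(2πi/3)·cbrt'∘υ, corresponding to the cyclic permutation (123) of the three cube roots. -/
open Complex Real Filter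

/-- The branch of the complex cube root whose values have argument in `[0, 2π/3)`. -/
noncomputable def cbrt' (z : ℂ) : ℂ :=
  if 0 ≤ z.arg then
    ((‖z‖ : ℝ) : ℂ) ^ ((1 : ℂ)/3) * Complex.exp (Complex.I * z.arg / 3)
  else
    ((‖z‖ : ℝ) : ℂ) ^ ((1 : ℂ)/3) *
      Complex.exp (Complex.I * z.arg / 3 + 2 * Real.pi * Complex.I / 3)

theorem cbrt'_discontinuous_on_contour
    (υ : ℂ → ℂ) (x₀ : ℂ) (hcont : ContinuousAt υ x₀)
    (hne : υ x₀ ≠ 0) (harg : (υ x₀).arg = 0)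
    (x : ℕ → ℂ) (hx : Tendsto x atTop (nhds x₀))
    (hneg : ∀ n, (υ (x n)).arg < 0) :
    Tendsto (fun n => cbrt' (υ (x n))) atTop
      (nhds (Complex.exp (2 * Real.pi * Complex.I / 3) * cbrt' (υ x₀))) := by
  have hu : Tendsto (fun n => υ (x n)) atTop (nhds (υ x₀)) := hcont.tendsto.comp hx
  have hre : 0 < (υ x₀).re := by
    rcases Complex.arg_eq_zero_iff.mp harg with ⟨h1, h2⟩
    rcases lt_or_eq_of_le h1 with h | h
    · exact h
    · exact absurd (Complex.ext (by simp [← h]) (by simp [h2])) hne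
  have hslit : υ x₀ ∈ Complex.slitPlane := Or.inl hre
  have harg' : Tendsto (fun n => (υ (x n)).arg) atTop (nhds 0) := by
    have := (Complex.continuousAt_arg hslit).tendsto.comp hu
    rwa [harg] at this
  have habs : Tendsto (fun n => ((‖υ (x n)‖ : ℝ) : ℂ)) atTop
      (nhds ((‖υ x₀‖ : ℝ) : ℂ)) :=
    (Complex.continuous_ofReal.tendsto _).comp ((continuous_norm.tendsto _).comp hu)
  have hb : (0 : ℝ) < ‖υ x₀‖ := norm_pos_iff.mpr hne
  have hpow : Tendsto (fun n => (((‖υ (x n)‖ : ℝ) : ℂ)) ^ ((1 : ℂ)/3)) atTop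
      (nhds (((‖υ x₀‖ : ℝ) : ℂ) ^ ((1 : ℂ)/3))) :=
    (continuousAt_cpow_const (Or.inl (by simpa using hb))).tendsto.comp habs
  have hexp : Tendsto
      (fun n => Complex.exp (Complex.I * ((υ (x n)).arg : ℂ) / 3 + 2 * Real.pi * Complex.I / 3))
      atTop (nhds (Complex.exp (2 * Real.pi * Complex.I / 3))) := by
    have h1 : Tendsto (fun n => ((υ (x n)).arg : ℂ)) atTop (nhds 0) := by
      simpa [Function.comp_def] using (Complex.continuous_ofReal.tendsto 0).comp harg'
    have h2 : Tendsto
        (fun n => Complex.I * ((υ (x n)).arg : ℂ) / 3 + 2 * Real.pi * Complex.I / 3) atTop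
        (nhds (Complex.I * 0 / 3 + 2 * Real.pi * Complex.I / 3)) :=
      ((tendsto_const_nhds.mul h1).div_const 3).add tendsto_const_nhds
    simpa [Function.comp_def] using (Complex.continuous_exp.tendsto _).comp h2
  have key : Tendsto (fun n => cbrt' (υ (x n))) atTop
      (nhds (((‖υ x₀‖ : ℝ) : ℂ) ^ ((1 : ℂ)/3) *
        Complex.exp (2 * Real.pi * Complex.I / 3))) := by
    have heq : (fun n => cbrt' (υ (x n))) = fun n =>
        ((‖υ (x n)‖ : ℝ) : ℂ) ^ ((1 : ℂ)/3) *
          Complex.exp (Complex.I * ((υ (x n)).arg : ℂ) / 3 + 2 * Real.pi * Complex.I / 3) := by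
      funext n
      simp [cbrt', not_le.mpr (hneg n)]
    rw [heq]
    exact hpow.mul hexp
  convert key using 2
  simp [cbrt', harg, mul_comm]
end

section
/- Let P, Q ∈ ℂ, Q ≠ 0, with Δ = P² − (4/27)Q³, s² = Δ, and let c₊, c₋ be cube roots of (P+s)/2 and (P−s)/2 with c₊c₋ = Q/3. Define y_{+,a} = ω^{a−1}c₊ + (Q/3)ω^{1−a}c₊^{−1} and y_{−,a} = ω^{a−1}c₋ + (Q/3)ω^{1−a}c₋^{−1} for a = 1,2,3, where ω = exp(2πi/3). Then y_{+,1} = y_{−,1}, y_{+,2} = y_{−,3}, and y_{+,3} = y_{−,2}. -/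
open Complex

theorem cardano_families_transposition
    (P Q s cp cm : ℂ) (hQ : Q ≠ 0)
    (hs : s ^ 2 = P ^ 2 - (4/27) * Q ^ 3)
    (hcp : cp ^ 3 = (P + s) / 2) (hcm : cm ^ 3 = (P - s) / 2)
    (hprod : cp * cm = Q / 3)
    (yp ym : ℤ → ℂ)
    (hyp : ∀ a : ℤ, yp a =
      Complex.exp (2 * Real.pi * Complex.I / 3) ^ (a - 1) * cp +
        (Q/3) * Complex.exp (2 * Real.pi * Complex.I / 3) ^ (1 - a) * cp⁻¹)
    (hym : ∀ a : ℤ, ym a =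
      Complex.exp (2 * Real.pi * Complex.I / 3) ^ (a - 1) * cm +
        (Q/3) * Complex.exp (2 * Real.pi * Complex.I / 3) ^ (1 - a) * cm⁻¹) :
    yp 1 = ym 1 ∧ yp 2 = ym 3 ∧ yp 3 = ym 2 := by
  set ω : ℂ := Complex.exp (2 * Real.pi * Complex.I / 3) with hωdef
  have hω0 : ω ≠ 0 := Complex.exp_ne_zero _
  have hω3 : ω ^ (3 : ℕ) = 1 := by
    rw [hωdef, ← Complex.exp_nat_mul]
    rw [show ((3 : ℕ) : ℂ) * (2 * Real.pi * Complex.I / 3) = 2 * Real.pi * Complex.I by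
      push_cast; ring]
    exact Complex.exp_two_pi_mul_I
  have hcp0 : cp ≠ 0 := by
    intro h
    apply hQ
    have : Q = 3 * (cp * cm) := by rw [hprod]; ring
    simp [h, this]
  have hcm0 : cm ≠ 0 := by
    intro h
    apply hQ
    have : Q = 3 * (cp * cm) := by rw [hprod]; ring
    simp [h, this]
  have e1 : (Q/3) * cp⁻¹ = cm := by
    rw [← hprod]; field_simp
  have e2 : (Q/3) * cm⁻¹ = cp := by
    rw [← hprod]; field_simp
  have hinv : ω⁻¹ = ω ^ 2 := by
    have : ω ^ 2 * ω = 1 := by rw [← pow_succ]; exact hω3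
    field_simp
    linear_combination -this
  have hinv2 : (ω ^ 2)⁻¹ = ω := by
    field_simp
    linear_combination -hω3
  refine ⟨?_, ?_, ?_⟩
  · rw [hyp, hym]
    norm_num
    rw [e1, e2]
    ring
  · rw [hyp, hym]
    norm_num
    rw [hinv, hinv2]
    linear_combination ω ^ 2 * e1 - ω * e2
  · rw [hyp, hym]
    norm_num
    rw [hinv, hinv2]
    linear_combination ω * e1 - ω ^ 2 * e2
end
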